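/- Let q ≥ 2 and m ≥ 2 be integers, let s = (m−1)/m + θ with 0 < θ < 1/m, and fix signs ε₁, …, ε_m ∈ {+1, −1}. Let δ : ℕ → ⊕_{i∈ℕ} ℤ/qℤ be the bijection sending a natural number to its sequence of base-q digits, i.e. δ(n)_i = ⌊n/q^i⌋ mod q. Then there is a constant C (depending only on q, m and s) such that for every natural number n: the sum of n₁^{−s} ⋯ n_m^{−s} over all m-tuples (n₁, …, n_m) of positive integers with ε₁ δ(n₁) + … + ε_m δ(n_m) = δ(n) in ⊕_{i∈ℕ} ℤ/qℤ is at most C if n = 0, and at most C · n^{−mθ} if n ≥ 1. -/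

import Mathlib

/-- The base-`q` digit expansion of a natural number, viewed as a finitely supported element of
`⊕_{i ∈ ℕ} ℤ/qℤ` (here realized inside the product group `ℕ → ZMod q`):
`digitsMap q n i = ⌊n / q^i⌋ mod q`. -/
def digitsMap (q : ℕ) (n : ℕ) : ℕ → ZMod q := fun i => ((n / q ^ i) % q : ℕ)

/-!
Let `f` be a representation and `j` an index with `f j` maximal. As `ε j = ±1` is a unit and the
digit map is injective, `f j` is determined by the other `m - 1` coordinates; and since no digit of
`n` survives above the top digit of `f j`, we get `n / q < f j`. So the weight `∏ f_i ^ (-s)` is at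
most `max (n / q + 1, max_{i ≠ j} f_i) ^ (-s) * ∏_{i ≠ j} f_i ^ (-s)`, a function of the free
coordinates alone. Put `M = n / q` and `α = s - (m - 1)(1 - s) = mθ`. Free tuples in the box
`[1, M]^(m-1)` contribute `(M+1)^(-s) (∑_{t ≤ M} t^(-s))^(m-1) ≲ (M+1)^(-α)`. Otherwise the
largest free coordinate `x > M` carries `x^(-2s) (∑_{t ≤ x} t^(-s))^(m-2) ≲ x^(-1-α)`, and the tail
`∑_{x > M} x^(-1-α)` is again `≲ (M+1)^(-α)`. The partial sums `∑_{t ≤ X} t^(-s)` and the tail are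
bounded by telescoping against the tangent lines of `x ↦ x^p`.
-/

open Finset
open scoped ENNReal

section Digits

variable {q : ℕ}

theorem digitsMap_zero : digitsMap q 0 = 0 := by
  ext i; simp [digitsMap]

theorem digitsMap_div_pow (n k i : ℕ) : digitsMap q (n / q ^ k) i = digitsMap q n (k + i) := by
  simp [digitsMap, Nat.div_div_eq_div_mul, pow_add]

theorem digitsMap_apply_eq_zero_of_lt {n p : ℕ} (h : n < q ^ p) : digitsMap q n p = 0 := by
  simp [digitsMap, Nat.div_eq_of_lt h]

theorem digitsMap_injective (hq : 1 < q) : Function.Injective (digitsMap q) := by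
  have : NeZero q := ⟨by omega⟩
  intro a b h
  have hdigit (i : ℕ) : a / q ^ i % q = b / q ^ i % q := by
    simpa [digitsMap, ZMod.val_natCast] using congrArg ZMod.val (congrFun h i)
  have hmod (k : ℕ) : a % q ^ k = b % q ^ k := by
    induction k with
    | zero => simp [Nat.mod_one]
    | succ k ih => rw [Nat.mod_pow_succ, Nat.mod_pow_succ, ih, hdigit]
  have hlt : a + b < q ^ (a + b) := Nat.lt_pow_self hq
  calc a = a % q ^ (a + b) := (Nat.mod_eq_of_lt (by omega)).symm
    _ = b % q ^ (a + b) := hmod _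
    _ = b := Nat.mod_eq_of_lt (by omega)

theorem lt_pow_of_digitsMap_eq_zero (hq : 1 < q) {n k : ℕ}
    (h : ∀ p, k ≤ p → digitsMap q n p = 0) : n < q ^ k := by
  have hdiv : n / q ^ k = 0 := digitsMap_injective hq <| by
    ext i; rw [digitsMap_div_pow, digitsMap_zero, h _ (Nat.le_add_right k i)]; rfl
  exact Nat.div_eq_zero_iff_lt (by positivity) |>.mp hdiv

variable {ι : Type*} [Fintype ι] {ε : ι → ℤ}

theorem lt_pow_of_sum_smul_digitsMap_eq (hq : 1 < q) {f : ι → ℕ} {n k : ℕ}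
    (hf : ∀ i, f i < q ^ k) (h : ∑ i, ε i • digitsMap q (f i) = digitsMap q n) : n < q ^ k :=
  lt_pow_of_digitsMap_eq_zero hq fun p hp => by
    rw [← h, Finset.sum_apply]
    exact Finset.sum_eq_zero fun i _ => by
      rw [Pi.smul_apply, smul_eq_zero_of_right]
      exact digitsMap_apply_eq_zero_of_lt ((hf i).trans_le (Nat.pow_le_pow_right (by omega) hp))

theorem div_lt_of_sum_smul_digitsMap_eq (hq : 1 < q) {f : ι → ℕ} {n : ℕ} {j : ι}
    (hj : ∀ i, f i ≤ f j) (hfj : f j ≠ 0) (h : ∑ i, ε i • digitsMap q (f i) = digitsMap q n) :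
    n / q < f j := by
  have hn := lt_pow_of_sum_smul_digitsMap_eq hq
    (fun i => (hj i).trans_lt (Nat.lt_pow_succ_log_self hq (f j))) h
  rw [Nat.div_lt_iff_lt_mul (by omega)]
  calc n < q ^ Nat.log q (f j) * q := by rwa [← pow_succ]
    _ ≤ f j * q := Nat.mul_le_mul_right q (Nat.pow_log_le_self q hfj)

theorem eq_of_sum_smul_digitsMap_eq [DecidableEq ι] (hq : 1 < q) {f g : ι → ℕ} {j : ι}
    (hεj : IsUnit (ε j))
    (h : ∑ i, ε i • digitsMap q (f i) = ∑ i, ε i • digitsMap q (g i))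
    (hfg : ∀ i, i ≠ j → f i = g i) : f = g := by
  rw [Fintype.sum_eq_add_sum_subtype_ne _ j, Fintype.sum_eq_add_sum_subtype_ne _ j] at h
  rw [Fintype.sum_congr _ _ fun i => by rw [hfg i i.2]] at h
  have hj : f j = g j := digitsMap_injective hq <| hεj.smul_left_cancel.mp (add_right_cancel h)
  funext i
  by_cases hi : i = j
  · rw [hi, hj]
  · exact hfg i hi

end Digits

theorem rpow_le_tangent_of_le_one {p a b : ℝ} (hp0 : 0 ≤ p) (hp1 : p ≤ 1) (ha : 0 ≤ a)
    (hb : 0 < b) : a ^ p ≤ b ^ p + p * b ^ (p - 1) * (a - b) := by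
  have h := rpow_one_add_le_one_add_mul_self (s := a / b - 1)
    (by linarith [div_nonneg ha hb.le]) hp0 hp1
  rw [add_sub_cancel, Real.div_rpow ha hb.le, div_le_iff₀ (by positivity)] at h
  rw [Real.rpow_sub_one hb.ne']
  calc a ^ p ≤ (1 + p * (a / b - 1)) * b ^ p := h
    _ = _ := by field_simp

theorem tangent_le_rpow_of_nonpos {p a b : ℝ} (hp : p ≤ 0) (ha : 0 < a) (hb : 0 < b) :
    b ^ p + p * b ^ (p - 1) * (a - b) ≤ a ^ p := by
  have hlog : p * (a / b - 1) ≤ Real.log (a / b) * p := by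
    rw [mul_comm]
    exact mul_le_mul_of_nonpos_right (Real.log_le_sub_one_of_pos (by positivity)) hp
  have h : 1 + p * (a / b - 1) ≤ (a / b) ^ p := by
    rw [Real.rpow_def_of_pos (by positivity)]
    linarith [Real.add_one_le_exp (Real.log (a / b) * p)]
  rw [Real.div_rpow ha.le hb.le, le_div_iff₀ (by positivity)] at h
  rw [Real.rpow_sub_one hb.ne']
  calc _ = (1 + p * (a / b - 1)) * b ^ p := by field_simp
    _ ≤ a ^ p := h

-- The `t = 0` term vanishes: `(0 : ℝ) ^ (-s) = 0` since `s ≠ 0`.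
theorem sum_range_rpow_neg_le {s : ℝ} (hs0 : 0 < s) (hs1 : s < 1) (X : ℕ) :
    ∑ t ∈ range (X + 1), (t : ℝ) ^ (-s) ≤ (1 - s)⁻¹ * (X : ℝ) ^ (1 - s) := by
  induction X with
  | zero =>
    simp [Real.zero_rpow (neg_ne_zero.mpr hs0.ne'), Real.zero_rpow (sub_ne_zero.mpr hs1.ne')]
  | succ X ih =>
    have htangent := rpow_le_tangent_of_le_one (sub_nonneg.mpr hs1.le) (by linarith)
      (Nat.cast_nonneg X) (by positivity : (0 : ℝ) < X + 1)
    rw [sub_sub_cancel_left, show (X : ℝ) - (X + 1) = -1 by ring] at htangent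
    have hstep : ((X : ℝ) + 1) ^ (-s)
        ≤ (1 - s)⁻¹ * (((X : ℝ) + 1) ^ (1 - s) - (X : ℝ) ^ (1 - s)) := by
      rw [le_inv_mul_iff₀ (by linarith)]
      linarith
    rw [sum_range_succ]
    push_cast
    linarith [mul_sub (1 - s)⁻¹ (((X : ℝ) + 1) ^ (1 - s)) ((X : ℝ) ^ (1 - s))]

theorem sum_Ioc_rpow_neg_one_add_le {α : ℝ} (hα : 0 < α) (M N : ℕ) :
    ∑ x ∈ Ioc M N, (x : ℝ) ^ (-(1 + α)) ≤ (1 + α⁻¹) * ((M : ℝ) + 1) ^ (-α) := by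
  rcases le_or_gt N M with hNM | hMN
  · rw [Ioc_eq_empty (by omega), sum_empty]
    positivity
  have telescope : ∀ N, M + 1 ≤ N → ∑ x ∈ Ioc M N, (x : ℝ) ^ (-(1 + α)) + α⁻¹ * (N : ℝ) ^ (-α)
      ≤ ((M : ℝ) + 1) ^ (-(1 + α)) + α⁻¹ * ((M : ℝ) + 1) ^ (-α) := by
    intro N hN
    induction N, hN using Nat.le_induction with
    | base => simp [Nat.Ioc_succ_singleton]
    | succ N hN ih =>
      have htangent := tangent_le_rpow_of_nonpos (a := N) (b := N + 1) (neg_nonpos.mpr hα.le)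
        (Nat.cast_pos.mpr (by omega)) (by positivity)
      rw [show -α - 1 = -(1 + α) by ring, show (N : ℝ) - (N + 1) = -1 by ring] at htangent
      have hstep : ((N : ℝ) + 1) ^ (-(1 + α)) + α⁻¹ * ((N : ℝ) + 1) ^ (-α)
          ≤ α⁻¹ * (N : ℝ) ^ (-α) :=
        calc _ = α⁻¹ * (((N : ℝ) + 1) ^ (-α) + -α * ((N : ℝ) + 1) ^ (-(1 + α)) * -1) := by
              field_simp
              ring
          _ ≤ _ := mul_le_mul_of_nonneg_left htangent (inv_nonneg.mpr hα.le)
      rw [sum_Ioc_succ_top (by omega)]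
      push_cast
      linarith
  have hfirst : ((M : ℝ) + 1) ^ (-(1 + α)) ≤ ((M : ℝ) + 1) ^ (-α) :=
    Real.rpow_le_rpow_of_exponent_le (by linarith [M.cast_nonneg (α := ℝ)]) (by linarith)
  have hlast : 0 ≤ α⁻¹ * (N : ℝ) ^ (-α) := by positivity
  linarith [telescope N hMN]

theorem rpow_mul_mul_rpow_pow {x : ℝ} (hx : 0 < x) (a b c : ℝ) (k : ℕ) :
    x ^ a * (c * x ^ b) ^ k = c ^ k * x ^ (a + k * b) := by
  rw [mul_pow, ← Real.rpow_natCast (x ^ b), ← Real.rpow_mul hx.le, Real.rpow_add hx, mul_comm b]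
  ring

theorem rpow_neg_natDiv_add_one_le {n q : ℕ} (hq : 0 < q) {α : ℝ} (hα : 0 ≤ α) :
    (((n / q : ℕ) : ℝ) + 1) ^ (-α) ≤ (q : ℝ) ^ α * if n = 0 then 1 else (n : ℝ) ^ (-α) := by
  split_ifs with hn
  · rw [hn, Nat.zero_div, Nat.cast_zero, zero_add, Real.one_rpow, mul_one]
    exact Real.one_le_rpow (Nat.one_le_cast.mpr hq) hα
  have hlt : (n : ℝ) / q < ((n / q : ℕ) : ℝ) + 1 := by
    rw [← Nat.floor_div_eq_div (K := ℝ)]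
    exact Nat.lt_floor_add_one _
  have hn0 : (0 : ℝ) < n := Nat.cast_pos.mpr (Nat.pos_of_ne_zero hn)
  calc (((n / q : ℕ) : ℝ) + 1) ^ (-α) ≤ ((n : ℝ) / q) ^ (-α) :=
        Real.rpow_le_rpow_of_nonpos (by positivity) hlt.le (neg_nonpos.mpr hα)
    _ = (q : ℝ) ^ α * (n : ℝ) ^ (-α) := by
        rw [Real.div_rpow hn0.le (Nat.cast_nonneg q), Real.rpow_neg (Nat.cast_nonneg q),
          div_eq_mul_inv, inv_inv, mul_comm]

theorem summable_and_tsum_le_of_tsum_ofReal_le {β : Type*} {f : β → ℝ} (hf : ∀ b, 0 ≤ f b)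
    {c : ℝ} (hc : 0 ≤ c) (h : ∑' b, ENNReal.ofReal (f b) ≤ ENNReal.ofReal c) :
    Summable f ∧ ∑' b, f b ≤ c := by
  have hsum : Summable f :=
    (ENNReal.summable_toReal (ne_top_of_le_ne_top ENNReal.ofReal_ne_top h)).congr
      fun b => ENNReal.toReal_ofReal (hf b)
  refine ⟨hsum, (ENNReal.ofReal_le_ofReal_iff hc).mp ?_⟩
  rwa [ENNReal.ofReal_tsum_of_nonneg hf hsum]

theorem tsum_ite_lt_rpow_neg_le {α : ℝ} (hα : 0 < α) (M : ℕ) :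
    ∑' x : ℕ, (if M < x then ENNReal.ofReal ((x : ℝ) ^ (-(1 + α))) else 0)
      ≤ ENNReal.ofReal ((1 + α⁻¹) * ((M : ℝ) + 1) ^ (-α)) := by
  refine ENNReal.tsum_le_of_sum_range_le fun N => ?_
  rw [← sum_filter, ← ENNReal.ofReal_sum_of_nonneg fun _ _ => by positivity]
  refine ENNReal.ofReal_le_ofReal
    ((sum_le_sum_of_subset_of_nonneg ?_ fun _ _ _ => by positivity).trans
      (sum_Ioc_rpow_neg_one_add_le hα M N))
  intro x hx
  simp only [mem_filter, mem_range, mem_Ioc] at hx ⊢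
  omega

section Weights

variable {κ : Type*} [Fintype κ] {s α : ℝ}

/-- The weight `∏ f_i ^ (-s)` of a representation with its maximal coordinate dropped and its
factor replaced by the lower bound `max (M + 1) (max of the remaining coordinates)`, `M = n / q`.
Tuples with a zero coordinate get weight `0`, as `(0 : ℝ) ^ (-s) = 0`. -/
noncomputable def reducedWeight (s : ℝ) (M : ℕ) (g : κ → ℕ) : ℝ≥0∞ :=
  ENNReal.ofReal (((max (M + 1) (univ.sup g) : ℕ) : ℝ) ^ (-s)) *
    ∏ i, ENNReal.ofReal ((g i : ℝ) ^ (-s))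

noncomputable def boxWeight (s : ℝ) (X : ℕ) (g : κ → ℕ) : ℝ≥0∞ :=
  ∏ i, if g i ≤ X then ENNReal.ofReal ((g i : ℝ) ^ (-s)) else 0

noncomputable def maxAtWeight (s : ℝ) (M : ℕ) (i₀ : κ) (g : κ → ℕ) : ℝ≥0∞ :=
  if M < g i₀ ∧ ∀ i, g i ≤ g i₀ then
    ENNReal.ofReal ((g i₀ : ℝ) ^ (-s)) * ∏ i, ENNReal.ofReal ((g i : ℝ) ^ (-s))
  else 0

theorem reducedWeight_le (s : ℝ) (M : ℕ) (g : κ → ℕ) :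
    reducedWeight s M g ≤
      ENNReal.ofReal (((M : ℝ) + 1) ^ (-s)) * boxWeight s M g + ∑ i₀, maxAtWeight s M i₀ g := by
  by_cases hsmall : univ.sup g ≤ M
  · have hle (i : κ) : g i ≤ M := (le_sup (mem_univ i)).trans hsmall
    refine le_add_right (le_of_eq ?_)
    rw [reducedWeight, boxWeight, max_eq_left (by omega), prod_congr rfl fun i _ => if_pos (hle i)]
    push_cast
    rfl
  · obtain ⟨i, -, hi⟩ := Finset.lt_sup_iff.mp (not_le.mp hsmall)
    have : Nonempty κ := ⟨i⟩
    obtain ⟨i₀, hi₀⟩ := Finite.exists_max g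
    have hsup : univ.sup g = g i₀ :=
      le_antisymm (Finset.sup_le fun i _ => hi₀ i) (le_sup (mem_univ i₀))
    refine le_add_left (le_of_eq_of_le ?_ (single_le_sum (fun _ _ => zero_le) (mem_univ i₀)))
    rw [maxAtWeight, if_pos ⟨hi.trans_le (hi₀ i), hi₀⟩, reducedWeight, hsup,
      max_eq_right (by omega)]

variable [DecidableEq κ]

theorem tsum_pi_prod_eq_pow {h : ℕ → ℝ≥0∞} {X : ℕ} (hX : ∀ t, X < t → h t = 0) :
    ∑' g : κ → ℕ, ∏ i, h (g i) = (∑ t ∈ range (X + 1), h t) ^ Fintype.card κ := by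
  rw [← card_univ, ← prod_const, prod_univ_sum]
  refine tsum_eq_sum fun g hg => ?_
  obtain ⟨i, hi⟩ : ∃ i, g i ∉ range (X + 1) := by simpa [Fintype.mem_piFinset] using hg
  exact prod_eq_zero (mem_univ i) (hX _ (by simpa using hi))

theorem tsum_boxWeight_le (hs0 : 0 < s) (hs1 : s < 1) (X : ℕ) :
    ∑' g : κ → ℕ, boxWeight s X g
      ≤ ENNReal.ofReal (((1 - s)⁻¹ * (X : ℝ) ^ (1 - s)) ^ Fintype.card κ) := by
  rw [tsum_congr fun g => boxWeight.eq_1 s X g,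
    tsum_pi_prod_eq_pow (h := fun t => if t ≤ X then ENNReal.ofReal ((t : ℝ) ^ (-s)) else 0)
      (X := X) fun t ht => if_neg (by omega),
    sum_congr rfl fun t ht => if_pos (Nat.lt_succ_iff.mp (mem_range.mp ht)),
    ← ENNReal.ofReal_sum_of_nonneg fun _ _ => by positivity, ← ENNReal.ofReal_pow (by positivity)]
  exact ENNReal.ofReal_le_ofReal
    (pow_le_pow_left₀ (by positivity) (sum_range_rpow_neg_le hs0 hs1 X) _)

theorem maxAtWeight_le (s : ℝ) (M : ℕ) (i₀ : κ) (g : κ → ℕ) :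
    maxAtWeight s M i₀ g ≤
      (if M < g i₀ then ENNReal.ofReal ((g i₀ : ℝ) ^ (-s) * (g i₀ : ℝ) ^ (-s)) else 0) *
        boxWeight s (g i₀) (fun i : {i // i ≠ i₀} => g i) := by
  by_cases hg : M < g i₀ ∧ ∀ i, g i ≤ g i₀
  · rw [maxAtWeight, if_pos hg, if_pos hg.1, ENNReal.ofReal_mul (by positivity), mul_assoc,
      Fintype.prod_eq_mul_prod_subtype_ne _ i₀, boxWeight,
      prod_congr rfl fun i _ => (if_pos (hg.2 i.1)).symm]
  · rw [maxAtWeight, if_neg hg]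
    exact zero_le

theorem ite_mul_tsum_boxWeight_le (hs0 : 0 < s) (hs1 : s < 1)
    (hα : α = s - (Fintype.card κ + 1) * (1 - s)) (M x : ℕ) :
    (if M < x then ENNReal.ofReal ((x : ℝ) ^ (-s) * (x : ℝ) ^ (-s)) else 0) *
        ∑' g : κ → ℕ, boxWeight s x g ≤
      ENNReal.ofReal ((1 - s)⁻¹ ^ Fintype.card κ) *
        if M < x then ENNReal.ofReal ((x : ℝ) ^ (-(1 + α))) else 0 := by
  split_ifs with hx
  · have hx0 : (0 : ℝ) < x := Nat.cast_pos.mpr (by omega)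
    calc _ ≤ ENNReal.ofReal ((x : ℝ) ^ (-s) * (x : ℝ) ^ (-s)) *
          ENNReal.ofReal (((1 - s)⁻¹ * (x : ℝ) ^ (1 - s)) ^ Fintype.card κ) := by
          gcongr
          exact tsum_boxWeight_le hs0 hs1 x
      _ = _ := by
        rw [← ENNReal.ofReal_mul (by positivity), ← ENNReal.ofReal_mul (by positivity),
          ← Real.rpow_add hx0, rpow_mul_mul_rpow_pow hx0, hα]
        ring_nf
  · rw [zero_mul, mul_zero]

theorem tsum_maxAtWeight_le (hs0 : 0 < s) (hs1 : s < 1) (hα : α = s - Fintype.card κ * (1 - s))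
    (hα0 : 0 < α) (M : ℕ) (i₀ : κ) :
    ∑' g : κ → ℕ, maxAtWeight s M i₀ g ≤
      ENNReal.ofReal ((1 - s)⁻¹ ^ (Fintype.card κ - 1) * ((1 + α⁻¹) * ((M : ℝ) + 1) ^ (-α))) := by
  have hcard : Fintype.card {i // i ≠ i₀} = Fintype.card κ - 1 := by
    rw [Fintype.card_subtype_compl, Fintype.card_subtype_eq]
  have hα' : α = s - (Fintype.card {i // i ≠ i₀} + 1) * (1 - s) := by
    rw [hcard, Nat.cast_sub (Fintype.card_pos_iff.mpr ⟨i₀⟩), hα]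
    ring
  let T (p : ℕ × ({i // i ≠ i₀} → ℕ)) : ℝ≥0∞ :=
    (if M < p.1 then ENNReal.ofReal ((p.1 : ℝ) ^ (-s) * (p.1 : ℝ) ^ (-s)) else 0) *
      boxWeight s p.1 p.2
  calc _ ≤ ∑' g, T (Equiv.funSplitAt i₀ ℕ g) := ENNReal.tsum_le_tsum (maxAtWeight_le s M i₀)
    _ = ∑' x, ∑' g', T (x, g') := by rw [Equiv.tsum_eq, ENNReal.tsum_prod']
    _ ≤ ∑' x : ℕ, ENNReal.ofReal ((1 - s)⁻¹ ^ (Fintype.card κ - 1)) *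
          if M < x then ENNReal.ofReal ((x : ℝ) ^ (-(1 + α))) else 0 :=
      ENNReal.tsum_le_tsum fun x => by
        simp only [T, ENNReal.tsum_mul_left]
        rw [← hcard]
        exact ite_mul_tsum_boxWeight_le hs0 hs1 hα' M x
    _ ≤ _ := by
      rw [ENNReal.tsum_mul_left, ENNReal.ofReal_mul (by positivity)]
      gcongr
      exact tsum_ite_lt_rpow_neg_le hα0 M

theorem tsum_reducedWeight_le (hs0 : 0 < s) (hs1 : s < 1)
    (hα : α = s - Fintype.card κ * (1 - s)) (hα0 : 0 < α) :
    ∃ K : ℝ, 0 < K ∧ ∀ M : ℕ,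
      ∑' g : κ → ℕ, reducedWeight s M g ≤ ENNReal.ofReal (K * ((M : ℝ) + 1) ^ (-α)) := by
  set c := (1 - s)⁻¹
  set k := Fintype.card κ
  have hc : 0 < c := inv_pos.mpr (by linarith)
  refine ⟨c ^ k + k * (c ^ (k - 1) * (1 + α⁻¹)), by positivity, fun M => ?_⟩
  have hM : (0 : ℝ) < M + 1 := by positivity
  have hbox : ENNReal.ofReal (((M : ℝ) + 1) ^ (-s)) * ∑' g : κ → ℕ, boxWeight s M g
      ≤ ENNReal.ofReal (c ^ k * ((M : ℝ) + 1) ^ (-α)) := by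
    calc _ ≤ ENNReal.ofReal (((M : ℝ) + 1) ^ (-s)) *
          ENNReal.ofReal ((c * (M : ℝ) ^ (1 - s)) ^ k) := by
          gcongr
          exact tsum_boxWeight_le hs0 hs1 M
      _ ≤ ENNReal.ofReal (((M : ℝ) + 1) ^ (-s) * (c * ((M : ℝ) + 1) ^ (1 - s)) ^ k) := by
          rw [← ENNReal.ofReal_mul (by positivity)]
          gcongr
          linarith
      _ = ENNReal.ofReal (c ^ k * ((M : ℝ) + 1) ^ (-α)) := by
          rw [rpow_mul_mul_rpow_pow hM, hα]
          ring_nf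
  calc ∑' g, reducedWeight s M g
      ≤ ∑' g, (ENNReal.ofReal (((M : ℝ) + 1) ^ (-s)) * boxWeight s M g +
          ∑ i₀, maxAtWeight s M i₀ g) := ENNReal.tsum_le_tsum (reducedWeight_le s M)
    _ = ENNReal.ofReal (((M : ℝ) + 1) ^ (-s)) * ∑' g, boxWeight s M g +
          ∑ i₀, ∑' g, maxAtWeight s M i₀ g := by
        rw [ENNReal.tsum_add, ENNReal.tsum_mul_left,
          Summable.tsum_finsetSum fun _ _ => ENNReal.summable]
    _ ≤ ENNReal.ofReal (c ^ k * ((M : ℝ) + 1) ^ (-α)) +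
          ∑ _i₀ : κ, ENNReal.ofReal (c ^ (k - 1) * ((1 + α⁻¹) * ((M : ℝ) + 1) ^ (-α))) :=
        add_le_add hbox (sum_le_sum fun i₀ _ => tsum_maxAtWeight_le hs0 hs1 hα hα0 M i₀)
    _ = ENNReal.ofReal ((c ^ k + k * (c ^ (k - 1) * (1 + α⁻¹))) * ((M : ℝ) + 1) ^ (-α)) := by
        rw [sum_const, card_univ, show Fintype.card κ = k from rfl, nsmul_eq_mul,
          ← ENNReal.ofReal_natCast, ← ENNReal.ofReal_mul (by positivity),
          ← ENNReal.ofReal_add (by positivity) (by positivity)]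
        ring_nf

end Weights

section Representations

variable {ι : Type*} [Fintype ι] [DecidableEq ι] {q : ℕ} {ε : ι → ℤ}

def signedRepresentations (q : ℕ) (ε : ι → ℤ) (n : ℕ) : Set (ι → ℕ) :=
  {f | (∀ i, 0 < f i) ∧ ∑ i, ε i • digitsMap q (f i) = digitsMap q n}

theorem ofReal_prod_rpow_le_reducedWeight (hq : 1 < q) {s : ℝ} (hs : 0 ≤ s) {n : ℕ}
    {f : ι → ℕ} (hf : f ∈ signedRepresentations q ε n) {j : ι} (hj : ∀ i, f i ≤ f j) :
    ENNReal.ofReal (∏ i, (f i : ℝ) ^ (-s)) ≤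
      reducedWeight s (n / q) (fun i : {i // i ≠ j} => f i) := by
  have hmax : max (n / q + 1) (univ.sup fun i : {i // i ≠ j} => f i) ≤ f j :=
    max_le (div_lt_of_sum_smul_digitsMap_eq hq hj (hf.1 j).ne' hf.2)
      (Finset.sup_le fun i _ => hj i)
  rw [Fintype.prod_eq_mul_prod_subtype_ne _ j, ENNReal.ofReal_mul (by positivity),
    ENNReal.ofReal_prod_of_nonneg fun _ _ => by positivity, reducedWeight]
  refine mul_le_mul_left (ENNReal.ofReal_le_ofReal ?_) _
  exact Real.rpow_le_rpow_of_nonpos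
    (Nat.cast_pos.mpr ((Nat.succ_pos _).trans_le (le_max_left _ _)))
    (by exact_mod_cast hmax) (by linarith)

theorem restrict_injOn_signedRepresentations (hq : 1 < q) {j : ι} (hεj : IsUnit (ε j)) (n : ℕ) :
    Set.InjOn (fun f : ι → ℕ => fun i : {i // i ≠ j} => f i) (signedRepresentations q ε n) :=
  fun _ hf _ hf' hff' => eq_of_sum_smul_digitsMap_eq hq hεj (hf.2.trans hf'.2.symm)
    fun i hi => congrFun hff' ⟨i, hi⟩

theorem tsum_signedRepresentations_le [Nonempty ι] (hq : 1 < q) (hε : ∀ i, IsUnit (ε i))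
    {s α : ℝ} (hs0 : 0 < s) (hs1 : s < 1) (hα : α = s - (Fintype.card ι - 1 : ℕ) * (1 - s))
    (hα0 : 0 < α) :
    ∃ K : ℝ, 0 < K ∧ ∀ n : ℕ,
      ∑' f : signedRepresentations q ε n, ENNReal.ofReal (∏ i, (f.1 i : ℝ) ^ (-s)) ≤
        ENNReal.ofReal (K * (((n / q : ℕ) : ℝ) + 1) ^ (-α)) := by
  have hreduced (j : ι) := tsum_reducedWeight_le (κ := {i // i ≠ j}) hs0 hs1
    (by rwa [Fintype.card_subtype_compl, Fintype.card_subtype_eq]) hα0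
  choose K hK hbound using hreduced
  refine ⟨∑ j, K j, sum_pos (fun j _ => hK j) univ_nonempty, fun n => ?_⟩
  calc _ ≤ ∑' f : signedRepresentations q ε n,
          ∑ j, if ∀ i, f.1 i ≤ f.1 j then ENNReal.ofReal (∏ i, (f.1 i : ℝ) ^ (-s)) else 0 :=
        ENNReal.tsum_le_tsum fun f => by
          obtain ⟨j, hj⟩ := Finite.exists_max f.1
          refine le_trans ?_ (single_le_sum (fun _ _ => zero_le) (mem_univ j))
          rw [if_pos hj]
    _ = ∑ j, ∑' f : signedRepresentations q ε n,
          if ∀ i, f.1 i ≤ f.1 j then ENNReal.ofReal (∏ i, (f.1 i : ℝ) ^ (-s)) else 0 :=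
        Summable.tsum_finsetSum fun _ _ => ENNReal.summable
    _ ≤ ∑ j, ∑' f : signedRepresentations q ε n,
          reducedWeight s (n / q) (fun i : {i // i ≠ j} => f.1 i) :=
        sum_le_sum fun j _ => ENNReal.tsum_le_tsum fun f => by
          split_ifs with hj
          · exact ofReal_prod_rpow_le_reducedWeight hq hs0.le f.2 hj
          · exact zero_le
    _ ≤ ∑ j, ∑' g : {i // i ≠ j} → ℕ, reducedWeight s (n / q) g :=
        sum_le_sum fun j _ => ENNReal.tsum_comp_le_tsum_of_injective
          (restrict_injOn_signedRepresentations hq (hε j) n).injective _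
    _ ≤ ∑ j, ENNReal.ofReal (K j * (((n / q : ℕ) : ℝ) + 1) ^ (-α)) :=
        sum_le_sum fun j _ => hbound j _
    _ = _ := by
        rw [sum_mul, ENNReal.ofReal_sum_of_nonneg fun j _ => by have := hK j; positivity]

end Representations

theorem signed_representation_sum_bound_zmodq_general (q : ℕ) (hq : 2 ≤ q)
    (m : ℕ) (θ s : ℝ)
    (hθ₀ : 0 < θ) (hθ₁ : θ < 1 / m) (hs : s = (m - 1 : ℝ) / m + θ)
    (ε : Fin m → ℤ) (hε : ∀ i, ε i = 1 ∨ ε i = -1) :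
    ∃ C : ℝ, 0 < C ∧ ∀ n : ℕ,
      Summable (fun f : {f : Fin m → ℕ //
          (∀ i, 0 < f i) ∧ ∑ i, ε i • digitsMap q (f i) = digitsMap q n} =>
        ∏ i, ((f : Fin m → ℕ) i : ℝ) ^ (-s)) ∧
      ∑' f : {f : Fin m → ℕ //
          (∀ i, 0 < f i) ∧ ∑ i, ε i • digitsMap q (f i) = digitsMap q n},
          ∏ i, ((f : Fin m → ℕ) i : ℝ) ^ (-s) ≤
        if n = 0 then C else C * (n : ℝ) ^ (-(m * θ)) := by
  have hm : 0 < m := Nat.pos_of_ne_zero fun h => by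
    rw [h, Nat.cast_zero, div_zero] at hθ₁
    linarith
  have hs0 : 0 < s := by
    rw [hs]
    linarith [div_nonneg (sub_nonneg.mpr (Nat.one_le_cast.mpr hm)) (Nat.cast_nonneg (α := ℝ) m)]
  have hs1 : s < 1 := by
    rw [hs, sub_div, div_self (by positivity)]
    linarith
  have hα : (m * θ : ℝ) = s - (Fintype.card (Fin m) - 1 : ℕ) * (1 - s) := by
    rw [Fintype.card_fin, Nat.cast_sub hm, Nat.cast_one, hs]
    field_simp
    ring
  have : Nonempty (Fin m) := ⟨⟨0, hm⟩⟩
  obtain ⟨K, hK, hbound⟩ := tsum_signedRepresentations_le hq (fun i => Int.isUnit_iff.mpr (hε i))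
    hs0 hs1 hα (by positivity)
  refine ⟨K * (q : ℝ) ^ (m * θ), by positivity, fun n => ?_⟩
  obtain ⟨hsum, htsum⟩ :=
    summable_and_tsum_le_of_tsum_ofReal_le (fun f => by positivity) (by positivity) (hbound n)
  refine ⟨hsum, htsum.trans ?_⟩
  calc _ ≤ K * ((q : ℝ) ^ (m * θ) * if n = 0 then 1 else (n : ℝ) ^ (-(m * θ))) := by
        gcongr
        exact rpow_neg_natDiv_add_one_le (by omega) (by positivity)
    _ = _ := by split_ifs <;> ring

/-- Let `q ≥ 2`, `m ≥ 2`, `s = (m-1)/m + θ` with `0 < θ < 1/m`, and fix signs `ε i ∈ {±1}`.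
Let `δ : ℕ → ⊕_{i ∈ ℕ} ℤ/qℤ` be the base-`q` digit bijection. Then there is a constant `C > 0`
(depending only on `q`, `m`, `s`) such that for every `n : ℕ` the sum of `∏ i, (n i) ^ (-s)`
over all `m`-tuples of positive integers with `∑ i, ε i • δ (n i) = δ n` in the direct sum is
(summable and) at most `C` if `n = 0` and at most `C * n ^ (-mθ)` if `n ≥ 1`. -/
theorem signed_representation_sum_bound_zmodq (q : ℕ) (hq : 2 ≤ q)
    (m : ℕ) (hm : 2 ≤ m) (θ s : ℝ)
    (hθ₀ : 0 < θ) (hθ₁ : θ < 1 / m) (hs : s = (m - 1 : ℝ) / m + θ)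
    (ε : Fin m → ℤ) (hε : ∀ i, ε i = 1 ∨ ε i = -1) :
    ∃ C : ℝ, 0 < C ∧ ∀ n : ℕ,
      Summable (fun f : {f : Fin m → ℕ //
          (∀ i, 0 < f i) ∧ ∑ i, ε i • digitsMap q (f i) = digitsMap q n} =>
        ∏ i, ((f : Fin m → ℕ) i : ℝ) ^ (-s)) ∧
      ∑' f : {f : Fin m → ℕ //
          (∀ i, 0 < f i) ∧ ∑ i, ε i • digitsMap q (f i) = digitsMap q n},
          ∏ i, ((f : Fin m → ℕ) i : ℝ) ^ (-s) ≤
        if n = 0 then C else C * (n : ℝ) ^ (-(m * θ)) :=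
  signed_representation_sum_bound_zmodq_general q hq m θ s hθ₀ hθ₁ hs ε hε
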